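/- Probabilistic Newman's lemma: if a PARS is strongly normalising (no infinite chains of proper parallel evolution ⇒_P¹) and locally confluent (any peak E ⇐_P¹ D ⇒_P¹ F closes via ↠*), then it is distribution confluent. -/

import Mathlib

open Relation
open scoped NNReal

abbrev PDist (A : Type) := List (ℝ≥0 × A)

namespace PPARS

variable {A X : Type}

/-- Total weight of a list distribution. -/
def weight (D : PDist A) : ℝ≥0 := (D.map Prod.fst).sum

/-- Scale every weight of a distribution by `α`. -/
def scale (α : ℝ≥0) (D : PDist A) : PDist A := D.map (fun pa => (α * pa.1, pa.2))

open Classical in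
/-- Total weight that `D` assigns to the element `a`. -/
noncomputable def wt (D : PDist A) (a : A) : ℝ≥0 :=
  (D.map (fun pa => if pa.2 = a then pa.1 else 0)).sum

/-- The Flip rule, closed under list contexts. -/
inductive FlipS : PDist A → PDist A → Prop
  | mk (E₁ E₂ : PDist A) (p q : ℝ≥0) (a b : A) :
      FlipS (E₁ ++ [(p,a),(q,b)] ++ E₂) (E₁ ++ [(q,b),(p,a)] ++ E₂)

/-- The Join rule, closed under list contexts. -/
inductive JoinS : PDist A → PDist A → Prop
  | mk (E₁ E₂ : PDist A) (p q : ℝ≥0) (a : A) :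
      JoinS (E₁ ++ [(p,a),(q,a)] ++ E₂) (E₁ ++ [(p+q,a)] ++ E₂)

/-- The Split rule, closed under list contexts. -/
inductive SplitS : PDist A → PDist A → Prop
  | mk (E₁ E₂ : PDist A) (p q : ℝ≥0) (a : A) :
      SplitS (E₁ ++ [(p+q,a)] ++ E₂) (E₁ ++ [(p,a),(q,a)] ++ E₂)

/-- One `∼`-step: congruence closure of Flip, Join and Split. -/
def SimStep (D E : PDist A) : Prop := FlipS D E ∨ JoinS D E ∨ SplitS D E

/-- One Flip-or-Join step. -/
def FJ (D E : PDist A) : Prop := FlipS D E ∨ JoinS D E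

/-- Distribution equivalence `≈`. -/
def DEquiv : PDist A → PDist A → Prop := ReflTransGen SimStep

/-- Parallel evolution `⇒_P` for a PARS relation `R`. -/
inductive PEvol (R : A → PDist A → Prop) : PDist A → PDist A → Prop
  | nil : PEvol R [] []
  | keep {ds ds' : PDist A} (p : ℝ≥0) (a : A) :
      PEvol R ds ds' → PEvol R ((p,a) :: ds) ((p,a) :: ds')
  | evolve {a : A} {D ds ds' : PDist A} (p : ℝ≥0) :
      R a D → PEvol R ds ds' → PEvol R ((p,a) :: ds) (scale p D ++ ds')

/-- Proper parallel evolution `⇒_P¹`: at least one element evolves. -/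
inductive PEvol1 (R : A → PDist A → Prop) : PDist A → PDist A → Prop
  | evolve {a : A} {D ds ds' : PDist A} (p : ℝ≥0) :
      R a D → PEvol R ds ds' → PEvol1 R ((p,a) :: ds) (scale p D ++ ds')
  | keep {ds ds' : PDist A} (p : ℝ≥0) (a : A) :
      PEvol1 R ds ds' → PEvol1 R ((p,a) :: ds) ((p,a) :: ds')

/-- The determinisation relation `↠ = ⇒_P ∪ ≈`. -/
def Red (R : A → PDist A → Prop) (D E : PDist A) : Prop := PEvol R D E ∨ DEquiv D E

/-- `R` defines a PARS: successor distributions are normalised. -/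
def IsPARS (R : A → PDist A → Prop) : Prop := ∀ a D, R a D → weight D = 1

/-- A terminal element has no successor distribution. -/
def Terminal (R : A → PDist A → Prop) (a : A) : Prop := ∀ D, ¬ R a D

/-- A terminal distribution contains only terminal elements. -/
def TerminalD (R : A → PDist A → Prop) (D : PDist A) : Prop := ∀ pa ∈ D, Terminal R pa.2

/-- Classical confluence of a relation. -/
def Confluent (r : X → X → Prop) : Prop :=
  ∀ a b c, ReflTransGen r a b → ReflTransGen r a c →
    ∃ d, ReflTransGen r b d ∧ ReflTransGen r c d

/-- Raw (finite) computation trees. -/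
inductive CTree (A : Type) where
  | leaf (a : A)
  | node (a : A) (cs : List (ℝ≥0 × CTree A))

def CTree.root : CTree A → A
  | .leaf a => a
  | .node a _ => a

/-- `IsTree R t a`: `t` is a computation tree of the PARS `R` with root `a`. -/
inductive IsTree (R : A → PDist A → Prop) : CTree A → A → Prop
  | leaf (a : A) : IsTree R (.leaf a) a
  | node (a : A) (cs : List (ℝ≥0 × CTree A)) :
      R a (cs.map fun x => (x.1, x.2.root)) →
      (∀ x ∈ cs, IsTree R x.2 x.2.root) →
      IsTree R (.node a cs) a

mutual
/-- Support of a computation tree. -/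
def supp : CTree A → PDist A
  | .leaf a => [(1, a)]
  | .node _ cs => suppL cs
def suppL : List (ℝ≥0 × CTree A) → PDist A
  | [] => []
  | (p, t) :: ts => scale p (supp t) ++ suppL ts
end

/-- A tree is maximal when all its leaves are terminal elements. -/
inductive MaximalT (R : A → PDist A → Prop) : CTree A → Prop
  | leaf (a : A) : Terminal R a → MaximalT R (.leaf a)
  | node (a : A) (cs : List (ℝ≥0 × CTree A)) :
      (∀ x ∈ cs, MaximalT R x.2) → MaximalT R (.node a cs)

end PPARS


/-!
Refine `⇒_P` to multi-evolutions (`MultiEvol`), in which every entry `(p, a)` may first be split into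
fragments that are kept or evolved by rules of their own. Unlike `⇒_P`, these commute with `≈`:
an `≈`-step followed by a multi-evolution is a multi-evolution followed by `≈`. Hence every
reduction of `D ++ E` splits into reductions of `D` and of `E`, and it suffices to show that a
single entry `[(p, a)]` has a unique normal form up to `≈`.

This goes by well-founded induction on `a` along the successor relation, which is well-founded by
strong normalisation. For non-terminal `a` fix a rule `a ↦ X₀` with normal form `N₀`; local
confluence and the induction hypothesis give `scale u X` the normal form `scale u N₀` for every
rule `a ↦ X`. A reduct of `[(p, a)]` is, up to `≈`, some unevolved copies of `a` next to a reduct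
of a mixture of such `scale u X`, of total weight `p` (`PartlyEvolved`). A normal form has no copies of `a` left, so
it is `≈ scale p N₀`. Confluence follows, as every distribution reaches a normal form.
-/

namespace PPARS

variable {A : Type} {R : A → PDist A → Prop}

@[simp] lemma scale_nil (p : ℝ≥0) : scale p ([] : PDist A) = [] := rfl

@[simp] lemma scale_cons (p q : ℝ≥0) (a : A) (D : PDist A) :
    scale p ((q, a) :: D) = (p * q, a) :: scale p D := rfl

@[simp] lemma scale_append (p : ℝ≥0) (D E : PDist A) :
    scale p (D ++ E) = scale p D ++ scale p E := List.map_append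

lemma scale_scale (p q : ℝ≥0) (D : PDist A) : scale p (scale q D) = scale (p * q) D := by
  simp [scale, Function.comp_def, mul_assoc]

@[simp] lemma scale_one (D : PDist A) : scale 1 D = D := by
  simp [scale]

@[simp] lemma weight_append (D E : PDist A) : weight (D ++ E) = weight D + weight E := by
  simp [weight]

lemma SimStep.symm {D E : PDist A} (h : SimStep D E) : SimStep E D := by
  rcases h with ⟨E₁, E₂, p, q, a, b⟩ | ⟨E₁, E₂, p, q, a⟩ | ⟨E₁, E₂, p, q, a⟩
  · exact .inl (.mk E₁ E₂ q p b a)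
  · exact .inr (.inr (.mk E₁ E₂ p q a))
  · exact .inr (.inl (.mk E₁ E₂ p q a))

lemma SimStep.append_context {D E : PDist A} (K M : PDist A) (h : SimStep D E) :
    SimStep (K ++ D ++ M) (K ++ E ++ M) := by
  rcases h with ⟨E₁, E₂, p, q, a, b⟩ | ⟨E₁, E₂, p, q, a⟩ | ⟨E₁, E₂, p, q, a⟩
  · exact .inl (by simpa using FlipS.mk (K ++ E₁) (E₂ ++ M) p q a b)
  · exact .inr (.inl (by simpa using JoinS.mk (K ++ E₁) (E₂ ++ M) p q a))
  · exact .inr (.inr (by simpa using SplitS.mk (K ++ E₁) (E₂ ++ M) p q a))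

protected lemma SimStep.scale {D E : PDist A} (u : ℝ≥0) (h : SimStep D E) :
    SimStep (scale u D) (scale u E) := by
  rcases h with ⟨E₁, E₂, p, q, a, b⟩ | ⟨E₁, E₂, p, q, a⟩ | ⟨E₁, E₂, p, q, a⟩
  · exact .inl (by simpa using FlipS.mk (scale u E₁) (scale u E₂) (u * p) (u * q) a b)
  · have := JoinS.mk (scale u E₁) (scale u E₂) (u * p) (u * q) a
    exact .inr (.inl (by simpa [mul_add] using this))
  · have := SplitS.mk (scale u E₁) (scale u E₂) (u * p) (u * q) a
    exact .inr (.inr (by simpa [mul_add] using this))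

lemma SimStep.mem_map_snd_iff {D E : PDist A} (h : SimStep D E) (b : A) :
    b ∈ D.map Prod.snd ↔ b ∈ E.map Prod.snd := by
  obtain h | h | h := h <;> cases h <;> simp [or_left_comm]

namespace DEquiv

protected lemma refl (D : PDist A) : DEquiv D D := ReflTransGen.refl

protected lemma single {D E : PDist A} (h : SimStep D E) : DEquiv D E := ReflTransGen.single h

protected lemma trans {D E F : PDist A} (h : DEquiv D E) (h' : DEquiv E F) : DEquiv D F :=
  ReflTransGen.trans h h'

protected lemma symm {D E : PDist A} (h : DEquiv D E) : DEquiv E D := by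
  induction h with
  | refl => exact .refl _
  | tail _ hs ih => exact ReflTransGen.head hs.symm ih

lemma append_context {D E : PDist A} (K M : PDist A) (h : DEquiv D E) :
    DEquiv (K ++ D ++ M) (K ++ E ++ M) :=
  ReflTransGen.lift (fun L => K ++ L ++ M) (fun _ _ => SimStep.append_context K M) D E h

lemma cons {D E : PDist A} (x : ℝ≥0 × A) (h : DEquiv D E) : DEquiv (x :: D) (x :: E) := by
  simpa using h.append_context [x] []

protected lemma append {D D' E E' : PDist A} (h : DEquiv D D') (h' : DEquiv E E') :
    DEquiv (D ++ E) (D' ++ E') := by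
  have h₁ : DEquiv (D ++ E) (D' ++ E) := by simpa using h.append_context [] E
  have h₂ : DEquiv (D' ++ E) (D' ++ E') := by simpa using h'.append_context D' []
  exact h₁.trans h₂

protected lemma scale {D E : PDist A} (u : ℝ≥0) (h : DEquiv D E) :
    DEquiv (scale u D) (scale u E) :=
  ReflTransGen.lift (scale u) (fun _ _ => SimStep.scale u) D E h

lemma of_perm {D E : PDist A} (h : D.Perm E) : DEquiv D E := by
  induction h with
  | nil => exact .refl _
  | cons x _ ih => exact ih.cons x
  | swap x y l => exact .single (.inl (by simpa using FlipS.mk [] l y.1 x.1 y.2 x.2))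
  | trans _ _ ih₁ ih₂ => exact ih₁.trans ih₂

lemma scale_append_scale (u v : ℝ≥0) (K : PDist A) :
    DEquiv (scale u K ++ scale v K) (scale (u + v) K) := by
  induction K with
  | nil => exact .refl _
  | cons x K ih =>
    obtain ⟨r, b⟩ := x
    have hjoin := JoinS.mk [] (scale u K ++ scale v K) (u * r) (v * r) b
    rw [← add_mul] at hjoin
    exact (of_perm (List.perm_middle.cons _)).trans
      ((DEquiv.single (.inr (.inl hjoin))).trans (ih.cons _))

lemma mem_map_snd_iff {D E : PDist A} (h : DEquiv D E) (b : A) :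
    b ∈ D.map Prod.snd ↔ b ∈ E.map Prod.snd := by
  induction h with
  | refl => rfl
  | tail _ hs ih => exact ih.trans (hs.mem_map_snd_iff b)

lemma terminalD {D E : PDist A} (h : DEquiv D E) (hD : TerminalD R D) : TerminalD R E := by
  intro x hx
  obtain ⟨y, hy, hyx⟩ := List.mem_map.1 ((h.mem_map_snd_iff x.2).2 (List.mem_map_of_mem hx))
  exact hyx ▸ hD y hy

lemma eq_nil_iff {D E : PDist A} (h : DEquiv D E) : D = [] ↔ E = [] := by
  simp only [← List.map_eq_nil_iff (f := Prod.snd), List.eq_nil_iff_forall_not_mem,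
    h.mem_map_snd_iff]

end DEquiv

@[simp] lemma terminalD_append {D E : PDist A} :
    TerminalD R (D ++ E) ↔ TerminalD R D ∧ TerminalD R E := by
  simp [TerminalD, or_imp, forall_and]

lemma TerminalD.scale {D : PDist A} (h : TerminalD R D) (u : ℝ≥0) : TerminalD R (scale u D) := by
  intro x hx
  obtain ⟨y, hy, rfl⟩ := List.mem_map.1 hx
  exact h y hy

protected lemma PEvol.refl (D : PDist A) : PEvol R D D := by
  induction D with
  | nil => exact .nil
  | cons x D ih => exact .keep x.1 x.2 ih

protected lemma PEvol.append {D₁ E₁ D₂ E₂ : PDist A} (h₁ : PEvol R D₁ E₁) (h₂ : PEvol R D₂ E₂) :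
    PEvol R (D₁ ++ D₂) (E₁ ++ E₂) := by
  induction h₁ with
  | nil => simpa using h₂
  | keep p a _ ih => exact .keep p a ih
  | evolve p hr _ ih => simpa using PEvol.evolve p hr ih

lemma PEvol1.pevol {D E : PDist A} (h : PEvol1 R D E) : PEvol R D E := by
  induction h with
  | evolve p hr h' => exact .evolve p hr h'
  | keep p a _ ih => exact .keep p a ih

lemma pevol1_middle {a : A} {X : PDist A} (hX : R a X) (P S : PDist A) (p : ℝ≥0) :
    PEvol1 R (P ++ (p, a) :: S) (P ++ (scale p X ++ S)) := by
  induction P with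
  | nil => simpa using PEvol1.evolve p hX (.refl S)
  | cons x P ih => exact .keep x.1 x.2 ih

lemma Red.append_context {D E : PDist A} (K M : PDist A) (h : Red R D E) :
    Red R (K ++ D ++ M) (K ++ E ++ M) := by
  rcases h with h | h
  · exact .inl (((PEvol.refl K).append h).append (.refl M))
  · exact .inr (h.append_context K M)

lemma red_star_append {D₁ E₁ D₂ E₂ : PDist A}
    (h₁ : ReflTransGen (Red R) D₁ E₁) (h₂ : ReflTransGen (Red R) D₂ E₂) :
    ReflTransGen (Red R) (D₁ ++ D₂) (E₁ ++ E₂) := by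
  have h₁' := h₁.lift (· ++ D₂) fun _ _ h => by simpa using h.append_context [] D₂
  have h₂' := h₂.lift (E₁ ++ ·) fun _ _ h => by simpa using h.append_context E₁ []
  exact h₁'.trans h₂'

inductive FragEvol (R : A → PDist A → Prop) : ℝ≥0 → A → PDist A → Prop
  | keep (p : ℝ≥0) (a : A) : FragEvol R p a [(p, a)]
  | evolve {a : A} {X : PDist A} (p : ℝ≥0) : R a X → FragEvol R p a (scale p X)
  | split {p q : ℝ≥0} {a : A} {B C : PDist A} :
      FragEvol R p a B → FragEvol R q a C → FragEvol R (p + q) a (B ++ C)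

inductive MultiEvol (R : A → PDist A → Prop) : PDist A → PDist A → Prop
  | nil : MultiEvol R [] []
  | cons {p : ℝ≥0} {a : A} {B D Z : PDist A} :
      FragEvol R p a B → MultiEvol R D Z → MultiEvol R ((p, a) :: D) (B ++ Z)

protected lemma FragEvol.scale {p : ℝ≥0} {a : A} {B : PDist A} (u : ℝ≥0)
    (h : FragEvol R p a B) : FragEvol R (u * p) a (scale u B) := by
  induction h with
  | keep p a => exact .keep (u * p) a
  | evolve p hr => rw [scale_scale]; exact .evolve _ hr
  | split _ _ ih₁ ih₂ => simpa [mul_add] using ih₁.split ih₂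

lemma FragEvol.red_star {p : ℝ≥0} {a : A} {B : PDist A} (h : FragEvol R p a B) :
    ReflTransGen (Red R) [(p, a)] B := by
  induction h with
  | keep p a => exact .refl
  | evolve p hr => exact .single (.inl (by simpa using PEvol.evolve p hr .nil))
  | @split p q a _ _ _ _ ih₁ ih₂ =>
    have hsplit : DEquiv [(p + q, a)] ([(p, a)] ++ [(q, a)]) :=
      .single (.inr (.inr (by simpa using SplitS.mk [] [] p q a)))
    exact .head (.inr hsplit) (red_star_append ih₁ ih₂)

lemma FragEvol.exists_split {r : ℝ≥0} {a : A} {Z : PDist A} (h : FragEvol R r a Z)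
    {p q : ℝ≥0} (hpq : p + q = r) :
    ∃ B C, FragEvol R p a B ∧ FragEvol R q a C ∧ DEquiv (B ++ C) Z := by
  induction h generalizing p q with
  | keep r a =>
    subst hpq
    exact ⟨_, _, .keep p a, .keep q a, .single (.inr (.inl (by simpa using JoinS.mk [] [] p q a)))⟩
  | evolve r hr =>
    subst hpq
    exact ⟨_, _, .evolve p hr, .evolve q hr, .scale_append_scale p q _⟩
  | @split r₁ r₂ a B' C' hB hC ihB ihC =>
    rcases le_total p r₁ with hle | hle
    · obtain ⟨B₁, C₁, hB₁, hC₁, hD₁⟩ := ihB (add_tsub_cancel_of_le hle)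
      have hq : q = r₁ - p + r₂ := by
        apply add_left_cancel (a := p)
        rw [← add_assoc, add_tsub_cancel_of_le hle, hpq]
      refine ⟨B₁, C₁ ++ C', hB₁, hq ▸ hC₁.split hC, ?_⟩
      simpa using hD₁.append (.refl C')
    · obtain ⟨B₂, C₂, hB₂, hC₂, hD₂⟩ := ihC (p := p - r₁) (q := q) (by
        apply add_left_cancel (a := r₁)
        rw [← add_assoc, add_tsub_cancel_of_le hle, hpq])
      refine ⟨B' ++ B₂, C₂, add_tsub_cancel_of_le hle ▸ hB.split hB₂, hC₂, ?_⟩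
      simpa using (DEquiv.refl B').append hD₂

namespace MultiEvol

protected lemma refl (D : PDist A) : MultiEvol R D D := by
  induction D with
  | nil => exact .nil
  | cons x D ih => exact .cons (.keep x.1 x.2) ih

protected lemma append {D₁ E₁ D₂ E₂ : PDist A} (h₁ : MultiEvol R D₁ E₁)
    (h₂ : MultiEvol R D₂ E₂) : MultiEvol R (D₁ ++ D₂) (E₁ ++ E₂) := by
  induction h₁ with
  | nil => simpa using h₂
  | cons hf _ ih => simpa using MultiEvol.cons hf ih

lemma of_append {X Y Z : PDist A} (h : MultiEvol R (X ++ Y) Z) :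
    ∃ Z₁ Z₂, MultiEvol R X Z₁ ∧ MultiEvol R Y Z₂ ∧ Z = Z₁ ++ Z₂ := by
  induction X generalizing Z with
  | nil => exact ⟨[], Z, .nil, h, rfl⟩
  | cons x X ih =>
    obtain ⟨p, a⟩ := x
    cases h with
    | cons hf h' =>
      obtain ⟨Z₁, Z₂, h₁, h₂, rfl⟩ := ih h'
      exact ⟨_, Z₂, .cons hf h₁, h₂, by simp⟩

lemma of_pevol {D E : PDist A} (h : PEvol R D E) : MultiEvol R D E := by
  induction h with
  | nil => exact .nil
  | keep p a _ ih => exact .cons (.keep p a) ih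
  | evolve p hr _ ih => exact .cons (.evolve p hr) ih

protected lemma scale {D E : PDist A} (u : ℝ≥0) (h : MultiEvol R D E) :
    MultiEvol R (scale u D) (scale u E) := by
  induction h with
  | nil => exact .nil
  | cons hf _ ih => simpa using MultiEvol.cons (hf.scale u) ih

lemma red_star {D E : PDist A} (h : MultiEvol R D E) : ReflTransGen (Red R) D E := by
  induction h with
  | nil => exact .refl
  | cons hf _ ih => simpa using red_star_append hf.red_star ih

end MultiEvol

lemma SimStep.multiEvol_comm {G E E₀ : PDist A} (h : SimStep G E) (hm : MultiEvol R E E₀) :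
    ∃ G₀, MultiEvol R G G₀ ∧ DEquiv G₀ E₀ := by
  rcases h with ⟨K, M, p, q, a, b⟩ | ⟨K, M, p, q, a⟩ | ⟨K, M, p, q, a⟩ <;>
    obtain ⟨Z₁, Z₂, hK, hmid, rfl⟩ := MultiEvol.of_append (X := K) (by simpa using hm)
  · rcases hmid with _ | ⟨hfb, _ | ⟨hfa, hM⟩⟩
    refine ⟨Z₁ ++ (_ ++ (_ ++ _)), by simpa using hK.append (.cons hfa (.cons hfb hM)), ?_⟩
    exact (DEquiv.refl Z₁).append (.of_perm (by simpa using List.perm_append_comm_assoc _ _ _))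
  · rcases hmid with _ | ⟨hf, hM⟩
    obtain ⟨B₁, B₂, hB₁, hB₂, hB⟩ := hf.exists_split rfl
    refine ⟨Z₁ ++ (B₁ ++ (B₂ ++ _)), by simpa using hK.append (.cons hB₁ (.cons hB₂ hM)), ?_⟩
    simpa using (DEquiv.refl Z₁).append (hB.append (.refl _))
  · rcases hmid with _ | ⟨hf₁, _ | ⟨hf₂, hM⟩⟩
    exact ⟨_, by simpa using hK.append (.cons (hf₁.split hf₂) hM), by simpa using .refl _⟩

lemma DEquiv.multiEvol_comm {G E E₀ : PDist A} (h : DEquiv G E) (hm : MultiEvol R E E₀) :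
    ∃ G₀, MultiEvol R G G₀ ∧ DEquiv G₀ E₀ := by
  induction h using ReflTransGen.head_induction_on with
  | refl => exact ⟨E₀, hm, .refl E₀⟩
  | head hs _ ih =>
    obtain ⟨Z, hZ, hZE⟩ := ih
    obtain ⟨G₀, hG₀, hGZ⟩ := hs.multiEvol_comm hZ
    exact ⟨G₀, hG₀, hGZ.trans hZE⟩

def Reaches (R : A → PDist A → Prop) : PDist A → PDist A → Prop :=
  ReflTransGen fun D E => ∃ Z, MultiEvol R D Z ∧ DEquiv Z E

lemma reaches_iff_red_star {D E : PDist A} : Reaches R D E ↔ ReflTransGen (Red R) D E := by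
  constructor
  · intro h
    induction h with
    | refl => exact .refl
    | tail _ hs ih =>
      obtain ⟨Z, hZ, hZE⟩ := hs
      exact ih.trans (hZ.red_star.tail (.inr hZE))
  · refine ReflTransGen.mono (fun D E h => ?_) D E
    rcases h with h | h
    · exact ⟨E, .of_pevol h, .refl E⟩
    · exact ⟨D, .refl D, h⟩

lemma MultiEvol.reaches {D E : PDist A} (h : MultiEvol R D E) : Reaches R D E :=
  .single ⟨E, h, .refl E⟩

lemma DEquiv.reaches {D E : PDist A} (h : DEquiv D E) : Reaches R D E :=
  .single ⟨D, .refl D, h⟩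

namespace Reaches

protected lemma scale {D E : PDist A} (u : ℝ≥0) (h : Reaches R D E) :
    Reaches R (scale u D) (scale u E) :=
  ReflTransGen.lift (scale u) (fun _ _ ⟨Z, hZ, hZE⟩ => ⟨scale u Z, hZ.scale u, hZE.scale u⟩) D E h

protected lemma append {D₁ E₁ D₂ E₂ : PDist A} (h₁ : Reaches R D₁ E₁) (h₂ : Reaches R D₂ E₂) :
    Reaches R (D₁ ++ D₂) (E₁ ++ E₂) := by
  rw [reaches_iff_red_star] at *
  exact red_star_append h₁ h₂

lemma of_append {D₁ D₂ E : PDist A} (h : Reaches R (D₁ ++ D₂) E) :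
    ∃ E₁ E₂, Reaches R D₁ E₁ ∧ Reaches R D₂ E₂ ∧ DEquiv (E₁ ++ E₂) E := by
  induction h with
  | refl => exact ⟨D₁, D₂, .refl, .refl, .refl _⟩
  | tail _ hstep ih =>
    obtain ⟨E₁, E₂, h₁, h₂, hE⟩ := ih
    obtain ⟨Z₀, hZ₀, hZ₀E⟩ := hstep
    obtain ⟨Z, hZ, hZZ₀⟩ := hE.multiEvol_comm hZ₀
    obtain ⟨Z₁, Z₂, hZ₁, hZ₂, rfl⟩ := hZ.of_append
    exact ⟨Z₁, Z₂, h₁.tail ⟨Z₁, hZ₁, .refl _⟩, h₂.tail ⟨Z₂, hZ₂, .refl _⟩, hZZ₀.trans hZ₀E⟩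

end Reaches

lemma FragEvol.dequiv_of_terminal {p : ℝ≥0} {a : A} {B : PDist A} (h : FragEvol R p a B)
    (ha : Terminal R a) : DEquiv [(p, a)] B := by
  induction h with
  | keep p a => exact .refl _
  | evolve p hr => exact absurd hr (ha _)
  | @split p q a _ _ _ _ ih₁ ih₂ =>
    have hsplit : DEquiv [(p + q, a)] ([(p, a)] ++ [(q, a)]) :=
      .single (.inr (.inr (by simpa using SplitS.mk [] [] p q a)))
    exact hsplit.trans ((ih₁ ha).append (ih₂ ha))

lemma MultiEvol.dequiv_of_terminalD {D Z : PDist A} (h : MultiEvol R D Z)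
    (hD : TerminalD R D) : DEquiv D Z := by
  induction h with
  | nil => exact .refl _
  | @cons p a _ _ _ hf _ ih =>
    have hD' : TerminalD R ([(p, a)] ++ _) := hD
    simpa using (hf.dequiv_of_terminal (hD' (p, a) (by simp))).append
      (ih (terminalD_append.1 hD').2)

lemma Reaches.dequiv_of_terminalD {D E : PDist A} (h : Reaches R D E) (hD : TerminalD R D) :
    DEquiv D E := by
  induction h with
  | refl => exact .refl _
  | tail _ hstep ih =>
    obtain ⟨Z, hZ, hZE⟩ := hstep
    exact ih.trans ((hZ.dequiv_of_terminalD (ih.terminalD hD)).trans hZE)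

lemma FragEvol.ne_nil (hR : IsPARS R) {p : ℝ≥0} {a : A} {B : PDist A} (h : FragEvol R p a B) :
    B ≠ [] := by
  induction h with
  | keep p a => simp
  | evolve p hr =>
    rintro hX
    simpa [scale, weight, List.map_eq_nil_iff.1 hX] using hR _ _ hr
  | split _ _ ih₁ _ => simp [ih₁]

lemma Reaches.ne_nil (hR : IsPARS R) {D E : PDist A} (h : Reaches R D E) (hD : D ≠ []) :
    E ≠ [] := by
  induction h with
  | refl => exact hD
  | tail _ hstep ih =>
    obtain ⟨Z, hZ, hZE⟩ := hstep
    refine mt hZE.eq_nil_iff.2 ?_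
    rcases hZ with _ | ⟨hf, _⟩
    · exact ih
    · simp [hf.ne_nil hR]

lemma Reaches.eq_nil_of_nil {E : PDist A} (h : Reaches R [] E) : E = [] := by
  induction h with
  | refl => rfl
  | tail _ hstep ih =>
    subst ih
    obtain ⟨Z, hZ, hZE⟩ := hstep
    cases hZ
    exact hZE.eq_nil_iff.1 rfl

def IsSucc (R : A → PDist A → Prop) (a b : A) : Prop := ∃ X w, R a X ∧ (w, b) ∈ X

lemma wellFounded_isSucc (hwf : WellFounded fun E D : PDist A => PEvol1 R D E) :
    WellFounded fun b a => IsSucc R a b := by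
  suffices h : ∀ D : PDist A, ∀ x ∈ D, Acc (fun b a => IsSucc R a b) x.2 from
    ⟨fun a => h [(1, a)] (1, a) (by simp)⟩
  intro D
  induction hwf.apply D with
  | intro D _ IH =>
    rintro ⟨p, a⟩ hmem
    refine ⟨_, fun b ⟨X, w, hX, hwX⟩ => ?_⟩
    obtain ⟨P, S, rfl⟩ := List.append_of_mem hmem
    exact IH _ (pevol1_middle hX P S p) (p * w, b) 
      (List.mem_append_right P (List.mem_append_left S (List.mem_map_of_mem hwX)))

lemma exists_reaches_terminalD (hwf : WellFounded fun E D : PDist A => PEvol1 R D E)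
    (D : PDist A) : ∃ N, Reaches R D N ∧ TerminalD R N := by
  induction hwf.apply D with
  | intro D _ IH =>
    by_cases hD : TerminalD R D
    · exact ⟨D, .refl, hD⟩
    obtain ⟨⟨p, a⟩, hmem, X, hX⟩ : ∃ x ∈ D, ∃ X, R x.2 X := by
      simpa [TerminalD, Terminal] using hD
    obtain ⟨P, S, rfl⟩ := List.append_of_mem hmem
    have hstep := pevol1_middle hX P S p
    obtain ⟨N, hN, hNt⟩ := IH _ hstep
    exact ⟨N, (MultiEvol.of_pevol hstep.pevol).reaches.trans hN, hNt⟩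

def UniqueNF (R : A → PDist A → Prop) (D : PDist A) : Prop :=
  ∀ N M, Reaches R D N → TerminalD R N → Reaches R D M → TerminalD R M → DEquiv N M

lemma uniqueNF_of_terminalD {D : PDist A} (hD : TerminalD R D) : UniqueNF R D :=
  fun _ _ hN _ hM _ => (hN.dequiv_of_terminalD hD).symm.trans (hM.dequiv_of_terminalD hD)

lemma UniqueNF.append {D₁ D₂ : PDist A} (h₁ : UniqueNF R D₁) (h₂ : UniqueNF R D₂) :
    UniqueNF R (D₁ ++ D₂) := by
  intro N M hN hNt hM hMt
  obtain ⟨N₁, N₂, hN₁, hN₂, hN'⟩ := hN.of_append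
  obtain ⟨M₁, M₂, hM₁, hM₂, hM'⟩ := hM.of_append
  obtain ⟨hN₁t, hN₂t⟩ := terminalD_append.1 (hN'.symm.terminalD hNt)
  obtain ⟨hM₁t, hM₂t⟩ := terminalD_append.1 (hM'.symm.terminalD hMt)
  exact hN'.symm.trans (((h₁ _ _ hN₁ hN₁t hM₁ hM₁t).append (h₂ _ _ hN₂ hN₂t hM₂ hM₂t)).trans hM')

lemma uniqueNF_of_forall_mem {D : PDist A} (h : ∀ x ∈ D, UniqueNF R [x]) : UniqueNF R D := by
  induction D with
  | nil => exact uniqueNF_of_terminalD (by simp [TerminalD])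
  | cons x D ih =>
    exact (h x (by simp)).append (ih fun y hy => h y (by simp [hy])) 

inductive SuccMix (R : A → PDist A → Prop) (a : A) : ℝ≥0 → PDist A → Prop
  | nil : SuccMix R a 0 []
  | cons {X S : PDist A} {t : ℝ≥0} (u : ℝ≥0) :
      R a X → SuccMix R a t S → SuccMix R a (u + t) (scale u X ++ S)

protected lemma SuccMix.append {a : A} {t u : ℝ≥0} {S T : PDist A} (h₁ : SuccMix R a t S)
    (h₂ : SuccMix R a u T) : SuccMix R a (t + u) (S ++ T) := by
  induction h₁ with
  | nil => simpa using h₂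
  | cons v hX _ ih => simpa [add_assoc] using SuccMix.cons v hX ih

def PartlyEvolved (R : A → PDist A → Prop) (a : A) (w : ℝ≥0) (Z : PDist A) : Prop :=
  ∃ K t S H, (∀ x ∈ K, x.2 = a) ∧ SuccMix R a t S ∧ weight K + t = w ∧ Reaches R S H ∧
    DEquiv Z (K ++ H)

namespace PartlyEvolved

protected lemma append {a : A} {w₁ w₂ : ℝ≥0} {Z₁ Z₂ : PDist A}
    (h₁ : PartlyEvolved R a w₁ Z₁) (h₂ : PartlyEvolved R a w₂ Z₂) :
    PartlyEvolved R a (w₁ + w₂) (Z₁ ++ Z₂) := by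
  obtain ⟨K₁, t₁, S₁, H₁, hK₁, hS₁, hw₁, hH₁, hZ₁⟩ := h₁
  obtain ⟨K₂, t₂, S₂, H₂, hK₂, hS₂, hw₂, hH₂, hZ₂⟩ := h₂
  refine ⟨K₁ ++ K₂, t₁ + t₂, S₁ ++ S₂, H₁ ++ H₂, by simp +contextual [or_imp, hK₁, hK₂],
    hS₁.append hS₂, by rw [← hw₁, ← hw₂, weight_append, add_add_add_comm], hH₁.append hH₂, ?_⟩
  refine (hZ₁.append hZ₂).trans (.of_perm ?_)
  simpa using (List.perm_append_comm_assoc H₁ K₂ H₂).append_left K₁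

lemma of_dequiv {a : A} {w : ℝ≥0} {Z Z' : PDist A} (h : PartlyEvolved R a w Z)
    (hZ : DEquiv Z' Z) : PartlyEvolved R a w Z' :=
  let ⟨K, t, S, H, hK, hS, hw, hH, hZH⟩ := h
  ⟨K, t, S, H, hK, hS, hw, hH, hZ.trans hZH⟩

end PartlyEvolved

lemma FragEvol.partlyEvolved {p : ℝ≥0} {a : A} {B : PDist A} (h : FragEvol R p a B) :
    PartlyEvolved R a p B := by
  induction h with
  | keep p a =>
    exact ⟨[(p, a)], 0, [], [], by simp, .nil, by simp [weight], .refl, by simpa using .refl _⟩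
  | evolve p hX =>
    exact ⟨[], p + 0, _, _, by simp, .cons p hX .nil, by simp [weight], .refl,
      by simpa using .refl _⟩
  | split _ _ ih₁ ih₂ => exact ih₁.append ih₂

lemma MultiEvol.partlyEvolved {a : A} {K Z : PDist A} (h : MultiEvol R K Z)
    (hK : ∀ x ∈ K, x.2 = a) : PartlyEvolved R a (weight K) Z := by
  induction h with
  | nil => exact ⟨[], 0, [], [], by simp, .nil, by simp [weight], .refl, .refl _⟩
  | @cons p b _ _ _ hf _ ih =>
    obtain rfl : b = a := hK (p, b) (by simp)
    simpa [weight] using hf.partlyEvolved.append (ih fun x hx => hK x (by simp [hx]))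

lemma Reaches.partlyEvolved {a : A} {K G : PDist A} (h : Reaches R K G)
    (hK : ∀ x ∈ K, x.2 = a) : PartlyEvolved R a (weight K) G := by
  induction h with
  | refl => exact ⟨K, 0, [], [], hK, .nil, add_zero _, .refl, by simpa using .refl _⟩
  | tail _ hstep ih =>
    obtain ⟨K', t, S, H, hK', hS, hw, hSH, hG⟩ := ih
    obtain ⟨Z₀, hZ₀, hZ₀G⟩ := hstep
    obtain ⟨Z, hZ, hZZ₀⟩ := hG.symm.multiEvol_comm hZ₀
    obtain ⟨Z₁, Z₂, h₁, h₂, rfl⟩ := hZ.of_append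
    have hZ₂ : PartlyEvolved R a t Z₂ :=
      ⟨[], t, S, Z₂, by simp, hS, by simp [weight], hSH.tail ⟨Z₂, h₂, .refl _⟩, .refl _⟩
    exact (hw ▸ (h₁.partlyEvolved hK').append hZ₂).of_dequiv (hZ₀G.symm.trans hZZ₀.symm)

def IsSuccNF (R : A → PDist A → Prop) (a : A) (N₀ : PDist A) : Prop :=
  ∀ X, R a X → ∀ u N, Reaches R (scale u X) N → TerminalD R N → DEquiv N (scale u N₀)

lemma SuccMix.reaches_terminalD {a : A} {N₀ : PDist A}
    (hsucc : IsSuccNF R a N₀)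
    {t : ℝ≥0} {S N : PDist A} (h : SuccMix R a t S) (hN : Reaches R S N) (hNt : TerminalD R N) :
    N = [] ∧ t = 0 ∨ DEquiv N (scale t N₀) := by
  induction h generalizing N with
  | nil => exact .inl ⟨hN.eq_nil_of_nil, rfl⟩
  | @cons X S t u hX _ ih =>
    obtain ⟨N₁, N₂, hN₁, hN₂, hN'⟩ := hN.of_append
    obtain ⟨hN₁t, hN₂t⟩ := terminalD_append.1 (hN'.symm.terminalD hNt)
    have h₁ := hsucc X hX u N₁ hN₁ hN₁t
    refine .inr (hN'.symm.trans ?_)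
    rcases ih hN₂ hN₂t with ⟨rfl, rfl⟩ | h₂
    · simpa using h₁
    · exact (h₁.append h₂).trans (.scale_append_scale u t N₀)

lemma PartlyEvolved.dequiv_scale {a : A} (ha : ¬ Terminal R a) {N₀ : PDist A}
    (hsucc : IsSuccNF R a N₀)
    {w : ℝ≥0} {N : PDist A} (h : PartlyEvolved R a w N) (hN : N ≠ []) (hNt : TerminalD R N) :
    DEquiv N (scale w N₀) := by
  obtain ⟨K, t, S, H, hK, hS, hw, hSH, hNH⟩ := h
  obtain ⟨hKt, hHt⟩ := terminalD_append.1 (hNH.terminalD hNt)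
  obtain rfl : K = [] := List.eq_nil_iff_forall_not_mem.2 fun x hx => ha (hK x hx ▸ hKt x hx)
  obtain rfl : t = w := by simpa [weight] using hw
  rcases hS.reaches_terminalD hsucc hSH hHt with ⟨rfl, -⟩ | hH
  · exact absurd (hNH.eq_nil_iff.2 rfl) hN
  · exact hNH.trans hH

lemma isSuccNF_of_localConfluent (hwf : WellFounded fun E D : PDist A => PEvol1 R D E)
    (hLC : ∀ D E F : PDist A, PEvol1 R D E → PEvol1 R D F →
      ∃ C, ReflTransGen (Red R) E C ∧ ReflTransGen (Red R) F C)
    {a : A} (huniq : ∀ X, R a X → ∀ u, UniqueNF R (scale u X))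
    {X₀ N₀ : PDist A} (hX₀ : R a X₀) (hN₀ : Reaches R X₀ N₀) (hN₀t : TerminalD R N₀) :
    IsSuccNF R a N₀ := by
  intro X hX u N hN hNt
  obtain ⟨C, hC₀, hC⟩ := hLC [(1, a)] _ _ (.evolve 1 hX₀ .nil) (.evolve 1 hX .nil)
  simp only [List.append_nil, scale_one, ← reaches_iff_red_star] at hC₀ hC
  obtain ⟨NC, hNC, hNCt⟩ := exists_reaches_terminalD hwf C
  have huniq₀ := huniq X₀ hX₀ 1
  rw [scale_one] at huniq₀
  have hNC₀ : DEquiv NC N₀ := huniq₀ NC N₀ (hC₀.trans hNC) hNCt hN₀ hN₀t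
  have hN' := huniq X hX u N _ hN hNt (Reaches.scale u (hC.trans hNC)) (hNCt.scale u)
  exact hN'.trans (hNC₀.scale u)

lemma uniqueNF_singleton (hR : IsPARS R) (hwf : WellFounded fun E D : PDist A => PEvol1 R D E)
    (hLC : ∀ D E F : PDist A, PEvol1 R D E → PEvol1 R D F →
      ∃ C, ReflTransGen (Red R) E C ∧ ReflTransGen (Red R) F C)
    (a : A) (p : ℝ≥0) : UniqueNF R [(p, a)] := by
  induction (wellFounded_isSucc hwf).apply a generalizing p with
  | intro a _ IH =>
  by_cases ha : Terminal R a
  · exact uniqueNF_of_terminalD (by simpa [TerminalD] using ha)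
  obtain ⟨X₀, hX₀⟩ : ∃ X, R a X := by simpa [Terminal] using ha
  obtain ⟨N₀, hN₀, hN₀t⟩ := exists_reaches_terminalD hwf X₀
  have hsucc : IsSuccNF R a N₀ := by
    refine isSuccNF_of_localConfluent hwf hLC (fun X hX u => ?_) hX₀ hN₀ hN₀t
    refine uniqueNF_of_forall_mem fun x hx => ?_
    obtain ⟨⟨w, b⟩, hb, rfl⟩ := List.mem_map.1 hx
    exact IH b ⟨X, w, hX, hb⟩ (u * w)
  have hnf : ∀ N, Reaches R [(p, a)] N → TerminalD R N → DEquiv N (scale p N₀) := by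
    intro N hN hNt
    simpa [weight] using
      (hN.partlyEvolved (by simp)).dequiv_scale ha hsucc (hN.ne_nil hR (by simp)) hNt
  exact fun N M hN hNt hM hMt => (hnf N hN hNt).trans (hnf M hM hMt).symm

end PPARS

open PPARS Relation in
/-- Probabilistic Newman's lemma: strong normalisation (no infinite `⇒_P¹`-chain)
plus local confluence implies distribution confluence. -/
theorem prob_newman {A : Type} (R : A → PDist A → Prop) (hR : IsPARS R)
    (hSN : ¬ ∃ f : ℕ → PDist A, ∀ n, PEvol1 R (f n) (f (n + 1)))
    (hLC : ∀ D E F : PDist A, PEvol1 R D E → PEvol1 R D F →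
      ∃ C, ReflTransGen (Red R) E C ∧ ReflTransGen (Red R) F C) :
    Confluent (Red R) := by
  have hwf : WellFounded fun E D : PDist A => PEvol1 R D E :=
    wellFounded_iff_isEmpty_descending_chain.2 ⟨fun ⟨f, hf⟩ => hSN ⟨f, hf⟩⟩
  intro D E F hE hF
  simp only [← reaches_iff_red_star] at hE hF ⊢
  obtain ⟨NE, hNE, hNEt⟩ := exists_reaches_terminalD hwf E
  obtain ⟨NF, hNF, hNFt⟩ := exists_reaches_terminalD hwf F
  have huniq : UniqueNF R D :=
    uniqueNF_of_forall_mem fun x _ => uniqueNF_singleton hR hwf hLC x.2 x.1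
  exact ⟨NF, hNE.trans (huniq NE NF (hE.trans hNE) hNEt (hF.trans hNF) hNFt).reaches, hNF⟩
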